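/- Let N be a quantum channel on d×d complex matrices, γ a positive-definite density matrix with N(γ) positive definite, and R_γ the Petz recovery map. Fix orthonormal eigenbases γ = ∑_i r_i |i⟩⟨i| and N(γ) = ∑_{k'} r'_{k'} |k'⟩⟨k'| with all r_i, r'_{k'} > 0, and define T_{ij→k'l'} = ⟨k'| N(|i⟩⟨j|) |l'⟩ and T̃_{ij←k'l'} = ⟨i| R_γ(|k'⟩⟨l'|) |j⟩. Then for all indices i, j, k', l': conj(T̃_{ij←k'l'}) = (r_i r_j / (r'_{k'} r'_{l'}))^{1/2} · T_{ij→k'l'}. Equivalently, whenever T̃_{ij←k'l'} ≠ 0, the quantum information exchange −log[T_{ij→k'l'} / conj(T̃_{ij←k'l'})] equals (1/2)log(r_i r_j) − (1/2)log(r'_{k'} r'_{l'}). -/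

import Mathlib

/-!
Both `T_{ij→k'l'}` and `conj T̃_{ij←k'l'}` reduce to the same Kraus sum
`∑ₘ ⟨k'|Kₘ|i⟩ conj ⟨l'|Kₘ|j⟩`. Each Kraus term of `N(|i⟩⟨j|)` and of
`N†(N(γ)^{-1/2} |k'⟩⟨l'| N(γ)^{-1/2})` factors through the rank-one matrix in the middle, and since
`|i⟩`, `|k'⟩` are eigenvectors of `γ`, `N(γ)`, the four matrix powers in `R_γ` only contribute the
scalar `(r_i r_j)^{1/2} (r'_{k'} r'_{l'})^{-1/2}`. The logarithmic form follows by dividing.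
-/

open Matrix
open scoped ComplexOrder

/-- ⟨v|A|w⟩ -/
noncomputable def braket {d : ℕ} (v : Fin d → ℂ) (A : Matrix (Fin d) (Fin d) ℂ)
    (w : Fin d → ℂ) : ℂ :=
  dotProduct (star v) (A.mulVec w)

/-- |v⟩⟨w| -/
noncomputable def ketbra {d : ℕ} (v w : Fin d → ℂ) : Matrix (Fin d) (Fin d) ℂ :=
  Matrix.vecMulVec v (star w)

/-- A quantum channel in Kraus form: N(X) = ∑ m, K m * X * (K m)ᴴ. -/
noncomputable def krausMap {d : ℕ} {ι : Type} [Fintype ι] (K : ι → Matrix (Fin d) (Fin d) ℂ)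
    (X : Matrix (Fin d) (Fin d) ℂ) : Matrix (Fin d) (Fin d) ℂ :=
  ∑ m, K m * X * (K m)ᴴ

/-- The adjoint map: N†(X) = ∑ m, (K m)ᴴ * X * K m. -/
noncomputable def krausAdj {d : ℕ} {ι : Type} [Fintype ι] (K : ι → Matrix (Fin d) (Fin d) ℂ)
    (X : Matrix (Fin d) (Fin d) ℂ) : Matrix (Fin d) (Fin d) ℂ :=
  ∑ m, (K m)ᴴ * X * K m

/-- An orthonormal family of vectors in ℂ^d. -/
def IsONB {d : ℕ} (e : Fin d → Fin d → ℂ) : Prop :=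
  ∀ i j, dotProduct (star (e i)) (e j) = if i = j then 1 else 0

/-- For A = ∑ i, r i • |e i⟩⟨e i| with `e` orthonormal and `r` positive, the complex
matrix power A^z = exp (z log A) is given by A^z = ∑ i, (r i)^z • |e i⟩⟨e i|. -/
noncomputable def projPow {d : ℕ} (r : Fin d → ℝ) (e : Fin d → Fin d → ℂ) (z : ℂ) :
    Matrix (Fin d) (Fin d) ℂ :=
  ∑ i, ((r i : ℂ) ^ z) • ketbra (e i) (e i)

/-- The Petz recovery map, expressed through the eigendecompositions
γ = ∑ r_i |i⟩⟨i| and N(γ) = ∑ r'_k |k'⟩⟨k'|: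
R_γ(X) = γ^{1/2} N†(N(γ)^{-1/2} X N(γ)^{-1/2}) γ^{1/2}. -/
noncomputable def petzB {d : ℕ} {ι : Type} [Fintype ι] (K : ι → Matrix (Fin d) (Fin d) ℂ)
    (r : Fin d → ℝ) (e : Fin d → Fin d → ℂ) (r' : Fin d → ℝ) (f : Fin d → Fin d → ℂ)
    (X : Matrix (Fin d) (Fin d) ℂ) : Matrix (Fin d) (Fin d) ℂ :=
  projPow r e (1/2) * krausAdj K (projPow r' f (-(1/2)) * X * projPow r' f (-(1/2))) *
    projPow r e (1/2)

section Braket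

variable {d : ℕ}

theorem braket_sum {ι : Type} [Fintype ι] (v : Fin d → ℂ) (A : ι → Matrix (Fin d) (Fin d) ℂ)
    (w : Fin d → ℂ) : braket v (∑ m, A m) w = ∑ m, braket v (A m) w := by
  simp only [braket, sum_mulVec, dotProduct_sum]

theorem braket_conjTranspose (v : Fin d → ℂ) (A : Matrix (Fin d) (Fin d) ℂ) (w : Fin d → ℂ) :
    braket v Aᴴ w = starRingEnd ℂ (braket w A v) := by
  rw [braket, braket, star_dotProduct, star_mulVec, conjTranspose_conjTranspose,
    ← dotProduct_mulVec]
  rfl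

theorem braket_mul_ketbra_mul (u : Fin d → ℂ) (A : Matrix (Fin d) (Fin d) ℂ) (v w : Fin d → ℂ)
    (B : Matrix (Fin d) (Fin d) ℂ) (x : Fin d → ℂ) :
    braket u (A * ketbra v w * B) x = braket u A v * braket w B x := by
  simp [braket, ketbra, ← mulVec_mulVec, vecMulVec_mulVec, mulVec_smul, mul_comm]

end Braket

section Eigen

variable {d : ℕ} {r : Fin d → ℝ} {e : Fin d → Fin d → ℂ}

theorem projPow_mulVec (he : IsONB e) (z : ℂ) (j : Fin d) :
    projPow r e z *ᵥ e j = ((r j : ℂ) ^ z) • e j := by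
  rw [projPow, sum_mulVec, Finset.sum_eq_single j]
  · simp [ketbra, smul_mulVec, vecMulVec_mulVec, he j j]
  · intro m _ hm
    simp [ketbra, smul_mulVec, vecMulVec_mulVec, he m j, hm]
  · simp

theorem star_vecMul_projPow (he : IsONB e) (z : ℂ) (i : Fin d) :
    star (e i) ᵥ* projPow r e z = ((r i : ℂ) ^ z) • star (e i) := by
  rw [projPow, vecMul_sum, Finset.sum_eq_single i]
  · simp [ketbra, vecMul_smul, vecMul_vecMulVec, he i i]
  · intro m _ hm
    simp [ketbra, vecMul_smul, vecMul_vecMulVec, he i m, Ne.symm hm]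
  · simp

theorem braket_mul_projPow (he : IsONB e) (v : Fin d → ℂ) (A : Matrix (Fin d) (Fin d) ℂ)
    (z : ℂ) (j : Fin d) :
    braket v (A * projPow r e z) (e j) = (r j : ℂ) ^ z * braket v A (e j) := by
  rw [braket, ← mulVec_mulVec, projPow_mulVec he, mulVec_smul, dotProduct_smul, smul_eq_mul,
    braket]

theorem braket_projPow_mul (he : IsONB e) (i : Fin d) (A : Matrix (Fin d) (Fin d) ℂ)
    (z : ℂ) (w : Fin d → ℂ) :
    braket (e i) (projPow r e z * A) w = (r i : ℂ) ^ z * braket (e i) A w := by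
  rw [braket, ← mulVec_mulVec, dotProduct_mulVec, star_vecMul_projPow he, smul_dotProduct,
    smul_eq_mul, braket]

end Eigen

theorem ofReal_cpow_one_half {s : ℝ} (hs : 0 ≤ s) : (s : ℂ) ^ (1/2 : ℂ) = (√s : ℂ) := by
  rw [Real.sqrt_eq_rpow, Complex.ofReal_cpow hs]
  norm_num

theorem ofReal_cpow_neg_one_half {s : ℝ} (hs : 0 ≤ s) :
    (s : ℂ) ^ (-(1/2) : ℂ) = ((√s)⁻¹ : ℝ) := by
  rw [Complex.cpow_neg, ofReal_cpow_one_half hs, Complex.ofReal_inv]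

theorem neg_log_div_ofReal_mul_self {c : ℝ} (hc : 0 < c) {z : ℂ} (hz : z ≠ 0) :
    -Complex.log (z / (c * z)) = Real.log c := by
  rw [div_mul_cancel_right₀ hz, ← Complex.ofReal_inv, ← Complex.ofReal_log (inv_pos.2 hc).le,
    Real.log_inv, Complex.ofReal_neg, neg_neg]

theorem log_sqrt_div {a b : ℝ} (ha : 0 < a) (hb : 0 < b) :
    Real.log √(a / b) = 1/2 * Real.log a - 1/2 * Real.log b := by
  rw [Real.log_sqrt (div_pos ha hb).le, Real.log_div ha.ne' hb.ne']
  ring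

section Channel

variable {d : ℕ} {ι : Type} [Fintype ι] (K : ι → Matrix (Fin d) (Fin d) ℂ)

theorem braket_krausMap_ketbra (u v w x : Fin d → ℂ) :
    braket u (krausMap K (ketbra v w)) x =
      ∑ m, braket u (K m) v * starRingEnd ℂ (braket x (K m) w) := by
  simp only [krausMap, braket_sum, braket_mul_ketbra_mul, braket_conjTranspose]

theorem braket_petzB_ketbra {r r' : Fin d → ℝ} {e f : Fin d → Fin d → ℂ} (he : IsONB e)
    (hf : IsONB f) (i j k l : Fin d) :
    braket (e i) (petzB K r e r' f (ketbra (f k) (f l))) (e j) =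
      (r i : ℂ) ^ (1/2 : ℂ) * (r j : ℂ) ^ (1/2 : ℂ) * (r' k : ℂ) ^ (-(1/2) : ℂ) *
        (r' l : ℂ) ^ (-(1/2) : ℂ) *
          ∑ m, starRingEnd ℂ (braket (f k) (K m) (e i)) * braket (f l) (K m) (e j) := by
  have term : ∀ m, braket (e i) ((K m)ᴴ *
      (projPow r' f (-(1/2)) * ketbra (f k) (f l) * projPow r' f (-(1/2))) * K m) (e j) =
      (r' k : ℂ) ^ (-(1/2) : ℂ) * (r' l : ℂ) ^ (-(1/2) : ℂ) *
        (starRingEnd ℂ (braket (f k) (K m) (e i)) * braket (f l) (K m) (e j)) := by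
    intro m
    rw [← Matrix.mul_assoc, ← Matrix.mul_assoc, Matrix.mul_assoc _ _ (K m),
      braket_mul_ketbra_mul, braket_mul_projPow hf, braket_projPow_mul hf, braket_conjTranspose]
    ring
  rw [petzB, braket_mul_projPow he, braket_projPow_mul he, krausAdj, braket_sum]
  simp only [term, ← Finset.mul_sum]
  ring

theorem conj_braket_petzB_ketbra {r r' : Fin d → ℝ} {e f : Fin d → Fin d → ℂ}
    (hr : ∀ i, 0 < r i) (he : IsONB e) (hr' : ∀ k, 0 < r' k) (hf : IsONB f) (i j k l : Fin d) :
    starRingEnd ℂ (braket (e i) (petzB K r e r' f (ketbra (f k) (f l))) (e j)) =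
      (√(r i * r j / (r' k * r' l)) : ℂ) *
        braket (f k) (krausMap K (ketbra (e i) (e j))) (f l) := by
  have sqrt_split :
      √(r i * r j / (r' k * r' l)) = √(r i) * √(r j) * (√(r' k))⁻¹ * (√(r' l))⁻¹ := by
    rw [Real.sqrt_div' _ (mul_pos (hr' k) (hr' l)).le, Real.sqrt_mul (hr i).le,
      Real.sqrt_mul (hr' k).le]
    field_simp
  rw [braket_petzB_ketbra K he hf, braket_krausMap_ketbra, ofReal_cpow_one_half (hr i).le,
    ofReal_cpow_one_half (hr j).le, ofReal_cpow_neg_one_half (hr' k).le,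
    ofReal_cpow_neg_one_half (hr' l).le, sqrt_split]
  simp only [map_mul, map_sum, Complex.conj_ofReal, Complex.conj_conj, Complex.ofReal_mul]

end Channel

theorem quantum_information_exchange_general
    {d : ℕ} {ι : Type} [Fintype ι] (K : ι → Matrix (Fin d) (Fin d) ℂ)
    (r : Fin d → ℝ) (e : Fin d → Fin d → ℂ) (hr : ∀ i, 0 < r i) (he : IsONB e)
    (r' : Fin d → ℝ) (f : Fin d → Fin d → ℂ) (hr' : ∀ k, 0 < r' k) (hf : IsONB f) :
    ∀ i j k l : Fin d,
      (starRingEnd ℂ) (braket (e i) (petzB K r e r' f (ketbra (f k) (f l))) (e j)) =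
        (Real.sqrt (r i * r j / (r' k * r' l)) : ℂ) *
          braket (f k) (krausMap K (ketbra (e i) (e j))) (f l) ∧
      (braket (e i) (petzB K r e r' f (ketbra (f k) (f l))) (e j) ≠ 0 →
        -Complex.log
            (braket (f k) (krausMap K (ketbra (e i) (e j))) (f l) /
              (starRingEnd ℂ) (braket (e i) (petzB K r e r' f (ketbra (f k) (f l))) (e j))) =
          ((1/2 * Real.log (r i * r j) - 1/2 * Real.log (r' k * r' l) : ℝ) : ℂ)) := by
  intro i j k l
  have hconj := conj_braket_petzB_ketbra K hr he hr' hf i j k l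
  refine ⟨hconj, fun hne => ?_⟩
  have hT : braket (f k) (krausMap K (ketbra (e i) (e j))) (f l) ≠ 0 :=
    right_ne_zero_of_mul (hconj ▸ (map_ne_zero _).2 hne)
  have hpos : 0 < r i * r j / (r' k * r' l) :=
    div_pos (mul_pos (hr i) (hr j)) (mul_pos (hr' k) (hr' l))
  rw [hconj, neg_log_div_ofReal_mul_self (Real.sqrt_pos.2 hpos) hT,
    log_sqrt_div (mul_pos (hr i) (hr j)) (mul_pos (hr' k) (hr' l))]

/-- for all matrix elements, conj(T̃_{ij←k'l'}) = √(r_i r_j/(r'_k r'_l)) T_{ij→k'l'};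
equivalently the quantum information exchange
−log[T_{ij→k'l'}/conj(T̃_{ij←k'l'})] equals ½log(r_i r_j) − ½log(r'_k r'_l). -/
theorem quantum_information_exchange
    {d : ℕ} {ι : Type} [Fintype ι] (K : ι → Matrix (Fin d) (Fin d) ℂ)
    (hK : ∑ m, (K m)ᴴ * K m = 1)
    (r : Fin d → ℝ) (e : Fin d → Fin d → ℂ) (hr : ∀ i, 0 < r i) (he : IsONB e)
    (hrtr : ∑ i, r i = 1)
    (r' : Fin d → ℝ) (f : Fin d → Fin d → ℂ) (hr' : ∀ k, 0 < r' k) (hf : IsONB f)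
    (hNγ : krausMap K (∑ i, ((r i : ℂ)) • ketbra (e i) (e i)) =
      ∑ k, ((r' k : ℂ)) • ketbra (f k) (f k)) :
    ∀ i j k l : Fin d,
      (starRingEnd ℂ) (braket (e i) (petzB K r e r' f (ketbra (f k) (f l))) (e j)) =
        (Real.sqrt (r i * r j / (r' k * r' l)) : ℂ) *
          braket (f k) (krausMap K (ketbra (e i) (e j))) (f l) ∧
      (braket (e i) (petzB K r e r' f (ketbra (f k) (f l))) (e j) ≠ 0 →
        -Complex.log
            (braket (f k) (krausMap K (ketbra (e i) (e j))) (f l) /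
              (starRingEnd ℂ) (braket (e i) (petzB K r e r' f (ketbra (f k) (f l))) (e j))) =
          ((1/2 * Real.log (r i * r j) - 1/2 * Real.log (r' k * r' l) : ℝ) : ℂ)) :=
  quantum_information_exchange_general K r e hr he r' f hr' hf
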